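/- Let n ≥ 2 and let F be a set of pairs (i,j) with 1 ≤ i < j ≤ n. Then the Lie subalgebra Lie({Ω_{ij} : (i,j) ∈ F}) equals so(n) if and only if the simple graph Γ_F with vertex set {1,…,n} and edge set F is connected. -/

import Mathlib

open Matrix

attribute [local instance 100] LieRing.ofAssociativeRing

/-- `Ω i j = E i j - E j i` where `E i j` is the standard basis matrix. -/
noncomputable def Omega (n : ℕ) (i j : Fin n) : Matrix (Fin n) (Fin n) ℝ :=
  Matrix.single i j 1 - Matrix.single j i 1

/-- The smallest Lie subalgebra (linear subspace closed under the commutator)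
of the `n × n` real matrices containing a set `S`. -/
noncomputable def lieGen (n : ℕ) (S : Set (Matrix (Fin n) (Fin n) ℝ)) :
    LieSubalgebra ℝ (Matrix (Fin n) (Fin n) ℝ) :=
  LieSubalgebra.lieSpan ℝ (Matrix (Fin n) (Fin n) ℝ) S

/-- The simple graph on `{1,…,n}` whose edges are the pairs in `F`. -/
def graphOf (n : ℕ) (F : Set (Fin n × Fin n)) : SimpleGraph (Fin n) where
  Adj a b := a ≠ b ∧ ((a, b) ∈ F ∨ (b, a) ∈ F)
  symm := by
    constructor
    intro a b h
    exact ⟨h.1.symm, h.2.symm⟩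
  loopless := by
    constructor
    intro a h
    exact h.1 rfl

/-!
The bracket `⁅Ω a b, Ω b c⁆ = Ω a c` propagates the generators along paths of `Γ_F`, so when
`Γ_F` is connected the generated Lie algebra contains every `Ω i j`, and these span `so(n)`.
Conversely, the matrices supported on the blocks `C × C` of the connected components `C` of `Γ_F`
form a Lie subalgebra containing all generators, and it misses `Ω a b` whenever `a` and `b` lie
in different components.
-/

open LieAlgebra.Orthogonal

namespace Matrix

variable {ι R : Type*} [Fintype ι]

lemma mul_apply_eq_zero_of_not_rel [NonUnitalNonAssocSemiring R] {r : Setoid ι}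
    {x y : Matrix ι ι R} (hx : ∀ a b, ¬ r a b → x a b = 0) (hy : ∀ a b, ¬ r a b → y a b = 0)
    {a b : ι} (hab : ¬ r a b) : (x * y) a b = 0 := by
  rw [mul_apply]
  refine Finset.sum_eq_zero fun k _ => ?_
  by_cases hak : r a k
  · simp [hy k b fun hkb => hab (r.trans hak hkb)]
  · simp [hx a k hak]

variable [DecidableEq ι] [CommRing R]

def blockLieSubalgebra (r : Setoid ι) : LieSubalgebra R (Matrix ι ι R) where
  carrier := {M | ∀ a b, ¬ r a b → M a b = 0}
  zero_mem' _ _ _ := rfl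
  add_mem' hx hy a b hab := by simp [hx a b hab, hy a b hab]
  smul_mem' c x hx a b hab := by simp [hx a b hab]
  lie_mem' hx hy a b hab := by
    simp [Ring.lie_def, mul_apply_eq_zero_of_not_rel hx hy hab,
      mul_apply_eq_zero_of_not_rel hy hx hab]

end Matrix

section Omega

variable {n : ℕ}

lemma Omega_swap (i j : Fin n) : Omega n j i = -Omega n i j :=
  (neg_sub _ _).symm

lemma Omega_self (i : Fin n) : Omega n i i = 0 :=
  sub_self _

lemma Omega_apply_left_right {a b : Fin n} (hab : a ≠ b) : Omega n a b a b = 1 := by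
  simp [Omega, hab.symm]

lemma Omega_mem_so (i j : Fin n) : Omega n i j ∈ so (Fin n) ℝ := by
  simp [Omega, transpose_single]

lemma lie_Omega_Omega {a b c : Fin n} (hab : a ≠ b) (hbc : b ≠ c) (hac : a ≠ c) :
    ⁅Omega n a b, Omega n b c⁆ = Omega n a c := by
  simp [Omega, Ring.lie_def, sub_mul, mul_sub, single_mul_single_of_ne, hab, hbc, hac,
    hab.symm, hbc.symm, hac.symm]

lemma Omega_mem_blockLieSubalgebra {r : Setoid (Fin n)} {i j : Fin n} (h : r i j) :
    Omega n i j ∈ blockLieSubalgebra r := by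
  intro a b hab
  have h1 : ¬ (i = a ∧ j = b) := by rintro ⟨rfl, rfl⟩; exact hab h
  have h2 : ¬ (j = a ∧ i = b) := by rintro ⟨rfl, rfl⟩; exact hab (r.symm h)
  simp [Omega, single_apply_of_ne _ _ _ _ _ h1, single_apply_of_ne _ _ _ _ _ h2]

lemma eq_sum_smul_Omega {M : Matrix (Fin n) (Fin n) ℝ} (hM : Mᵀ = -M) :
    M = ∑ i, ∑ j, (M i j / 2) • Omega n i j := by
  ext a b
  have hba : M b a = -M a b := by simpa using congr_fun (congr_fun hM a) b
  simp [Omega, Matrix.sum_apply, Matrix.single_apply, ite_and, mul_sub, Finset.sum_sub_distrib,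
    Finset.sum_ite_eq', hba]
  ring

lemma Omega_mem_of_reachable {G : SimpleGraph (Fin n)}
    {L : LieSubalgebra ℝ (Matrix (Fin n) (Fin n) ℝ)} (hG : ∀ u v, G.Adj u v → Omega n u v ∈ L)
    {a b : Fin n} (hab : G.Reachable a b) : Omega n a b ∈ L := by
  obtain ⟨w⟩ := hab
  induction w with
  | nil => simp [Omega_self]
  | @cons u v w huv _ ih =>
    by_cases hvw : v = w
    · exact hvw ▸ hG u v huv
    by_cases huw : u = w
    · simp [huw, Omega_self]
    rw [← lie_Omega_Omega huv.ne hvw huw]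
    exact L.lie_mem (hG u v huv) ih

lemma so_le_of_Omega_mem {L : LieSubalgebra ℝ (Matrix (Fin n) (Fin n) ℝ)}
    (hL : ∀ i j, Omega n i j ∈ L) : so (Fin n) ℝ ≤ L := by
  intro M hM
  rw [eq_sum_smul_Omega ((mem_so _ _ _).1 hM)]
  exact L.sum_mem fun i _ => L.sum_mem fun j _ => L.smul_mem _ (hL i j)

end Omega

theorem lieGen_eq_so_iff_connected_general (n : ℕ) (hn : 2 ≤ n) (F : Set (Fin n × Fin n)) :
    (lieGen n {M | ∃ p ∈ F, M = Omega n p.1 p.2} : Set (Matrix (Fin n) (Fin n) ℝ))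
      = {M | Mᵀ = -M} ↔ (graphOf n F).Connected := by
  set G := graphOf n F
  set L := lieGen n {M | ∃ p ∈ F, M = Omega n p.1 p.2}
  have hadj : ∀ u v, G.Adj u v → Omega n u v ∈ L := by
    rintro u v ⟨-, huv | hvu⟩
    · exact LieSubalgebra.subset_lieSpan ⟨_, huv, rfl⟩
    · rw [Omega_swap]
      exact neg_mem (LieSubalgebra.subset_lieSpan ⟨_, hvu, rfl⟩)
  have hL_le_so : L ≤ so (Fin n) ℝ :=
    LieSubalgebra.lieSpan_le.2 fun _ ⟨p, _, hp⟩ => hp ▸ Omega_mem_so p.1 p.2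
  have hL_le_block : L ≤ blockLieSubalgebra G.reachableSetoid := by
    refine LieSubalgebra.lieSpan_le.2 fun _ ⟨p, hpF, hp⟩ => hp ▸ ?_
    refine Omega_mem_blockLieSubalgebra ?_
    by_cases h : p.1 = p.2
    · exact h ▸ SimpleGraph.Reachable.refl _
    · exact SimpleGraph.Adj.reachable ⟨h, Or.inl hpF⟩
  constructor
  · intro hL
    refine G.connected_iff.2 ⟨fun a b => by_contra fun hab => ?_, ⟨⟨0, by omega⟩⟩⟩
    have hmem : Omega n a b ∈ (L : Set (Matrix (Fin n) (Fin n) ℝ)) := by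
      rw [hL]
      exact (mem_so _ _ _).1 (Omega_mem_so a b)
    have h0 := hL_le_block hmem a b hab
    rw [Omega_apply_left_right (by rintro rfl; exact hab (.refl a))] at h0
    exact one_ne_zero h0
  · intro hG
    have hL_eq : L = so (Fin n) ℝ :=
      le_antisymm hL_le_so (so_le_of_Omega_mem fun i j => Omega_mem_of_reachable hadj (hG i j))
    simp [hL_eq, Set.ext_iff]

theorem lieGen_eq_so_iff_connected (n : ℕ) (hn : 2 ≤ n) (F : Set (Fin n × Fin n))
    (hF : ∀ p ∈ F, p.1 < p.2) :
    (lieGen n {M | ∃ p ∈ F, M = Omega n p.1 p.2} : Set (Matrix (Fin n) (Fin n) ℝ))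
      = {M | Mᵀ = -M} ↔ (graphOf n F).Connected :=
  lieGen_eq_so_iff_connected_general n hn F
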